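/- arXiv:2303.12995 — 10 statements merged into one kernel-verified Lean document; each statement's English description precedes it below -/
import Mathlib

section
/- Let G be a group and κ : G → G a group automorphism with κ ∘ κ = id_G. Define a binary operation on G by x ◁ y = κ(y⁻¹) x y and define ρ : G → G by ρ(x) = x⁻¹. Then (G, ◁, κ, ρ) is a symmetric skew-rack; that is, axioms (SR1), (SR2), (SR3), (SS1), (SS2) all hold. -/
/-- For a group `G` and an involutive group automorphism `κ`,
the operation `x ◁ y = κ(y⁻¹) x y` with `ρ(x) = x⁻¹` defines a symmetric
skew-rack: axioms (SR1), (SR2), (SR3), (SS1), (SS2) all hold. -/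
theorem stmt_0 {G : Type*} [Group G] (κ : G →* G) (hκ : ∀ x, κ (κ x) = x) :
    -- (SR1): κ(a ◁ b) = κ(a) ◁ κ(b)
    (∀ a b : G, κ (κ b⁻¹ * a * b) = κ (κ b)⁻¹ * κ a * κ b) ∧
    -- (SR2): for every b, x ↦ x ◁ b is a bijection
    (∀ b : G, Function.Bijective fun x : G => κ b⁻¹ * x * b) ∧
    -- (SR3): (a ◁ b) ◁ c = (a ◁ κ(c)) ◁ (b ◁ c)
    (∀ a b c : G,
      κ c⁻¹ * (κ b⁻¹ * a * b) * c
        = κ (κ c⁻¹ * b * c)⁻¹ * (κ (κ c)⁻¹ * a * κ c) * (κ c⁻¹ * b * c)) ∧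
    -- (SS1): (a ◁ b) ◁ ρ(b) = a
    (∀ a b : G, κ b⁻¹⁻¹ * (κ b⁻¹ * a * b) * b⁻¹ = a) ∧
    -- (SS1): ρ(a) ◁ κ(b) = ρ(a ◁ b)
    (∀ a b : G, κ (κ b)⁻¹ * a⁻¹ * κ b = (κ b⁻¹ * a * b)⁻¹) ∧
    -- (SS2): ρ ∘ ρ = id, κ ∘ κ = id, ρ ∘ κ = κ ∘ ρ
    (∀ a : G, (a⁻¹)⁻¹ = a) ∧ (∀ a : G, κ (κ a) = a) ∧ (∀ a : G, (κ a)⁻¹ = κ a⁻¹) := by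
  refine ⟨?_, ?_, ?_, ?_, ?_, ?_, ?_, ?_⟩
  · intro a b; simp [map_mul, map_inv, hκ]
  · intro b
    constructor
    · intro x y h
      simpa using mul_left_cancel (mul_right_cancel h)
    · intro y
      exact ⟨κ b * y * b⁻¹, by simp [hκ, mul_assoc]⟩
  · intro a b c; simp [map_mul, map_inv, hκ, mul_assoc]
  · intro a b; simp [map_inv, mul_assoc]
  · intro a b; simp [map_mul, map_inv, hκ, mul_assoc]
  · intro a; simp
  · exact hκ
  · intro a; simp
end

section
/- Let K be a group and f : K → K a group automorphism with f ∘ f = id_K. On X = K × K define (x,a) ◁ (y,b) = (f(x) y⁻¹ b y, f(a)), κ(x,a) = (f(x), f(a)), and ρ(x,a) = (f(x), f(a)⁻¹). Then (X, ◁, κ, ρ) is a symmetric skew-rack (axioms (SR1)–(SR3), (SS1), (SS2) hold), and moreover for every (x,a) ∈ X the element (a⁻¹x, a) satisfies (a⁻¹x, a) ◁ κ(x,a) = κ(x,a); that is, the twisting map Tw, defined by letting Tw(z) be the unique element with Tw(z) ◁ κ(z) = κ(z), is given by Tw(x,a) = (a⁻¹x, a). -/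
/-- The skew-rack operation `(x,a) ◁ (y,b) = (f(x) y⁻¹ b y, f(a))` on `K × K`. -/
def op1 {K : Type*} [Group K] (f : K →* K) (p q : K × K) : K × K :=
  (f p.1 * q.1⁻¹ * q.2 * q.1, f p.2)

/-- `κ(x,a) = (f(x), f(a))`. -/
def kap1 {K : Type*} [Group K] (f : K →* K) (p : K × K) : K × K :=
  (f p.1, f p.2)

/-- `ρ(x,a) = (f(x), f(a)⁻¹)`. -/
def rho1 {K : Type*} [Group K] (f : K →* K) (p : K × K) : K × K :=
  (f p.1, (f p.2)⁻¹)

/-- For a group `K` and an involutive automorphism `f`, the above data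
is a symmetric skew-rack on `K × K`, and `(a⁻¹x, a)` satisfies the defining equation
of the twisting map: `(a⁻¹x, a) ◁ κ(x,a) = κ(x,a)`. -/
theorem stmt_1 {K : Type*} [Group K] (f : K →* K) (hf : ∀ x, f (f x) = x) :
    -- (SR1)
    (∀ p q : K × K, kap1 f (op1 f p q) = op1 f (kap1 f p) (kap1 f q)) ∧
    -- (SR2)
    (∀ q : K × K, Function.Bijective fun p : K × K => op1 f p q) ∧
    -- (SR3)
    (∀ p q r : K × K,
      op1 f (op1 f p q) r = op1 f (op1 f p (kap1 f r)) (op1 f q r)) ∧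
    -- (SS1)
    (∀ p q : K × K, op1 f (op1 f p q) (rho1 f q) = p) ∧
    (∀ p q : K × K, op1 f (rho1 f p) (kap1 f q) = rho1 f (op1 f p q)) ∧
    -- (SS2)
    (∀ p : K × K, rho1 f (rho1 f p) = p) ∧
    (∀ p : K × K, kap1 f (kap1 f p) = p) ∧
    (∀ p : K × K, rho1 f (kap1 f p) = kap1 f (rho1 f p)) ∧
    -- the twisting map: Tw(x,a) = (a⁻¹x, a)
    (∀ x a : K, op1 f (a⁻¹ * x, a) (kap1 f (x, a)) = kap1 f (x, a)) := by
  refine ⟨?_, ?_, ?_, ?_, ?_, ?_, ?_, ?_, ?_⟩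
  · intro p q; simp [op1, kap1, hf]
  · intro q
    refine Function.bijective_iff_has_inverse.2
      ⟨fun p => (f (p.1 * q.1⁻¹ * q.2⁻¹ * q.1), f p.2), ?_, ?_⟩
    · intro p; simp [op1, hf, mul_assoc]
    · intro p; simp [op1, hf, mul_assoc]
  · intro p q r; simp [op1, kap1, hf, mul_assoc]
  · intro p q; simp [op1, rho1, hf, mul_assoc]
  · intro p q; simp [op1, rho1, kap1, hf, mul_assoc]
  · intro p; simp [rho1, hf]
  · intro p; simp [kap1, hf]
  · intro p; simp [rho1, kap1, hf]
  · intro x a; simp [op1, kap1, hf, mul_assoc]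
end

section
/- Let G be a group, κ : G → G a group automorphism with κ ∘ κ = id_G, and δ : G → G a map with κ ∘ δ = δ ∘ κ; define x ◁ y = κ(x)δ(y). Then for any a₁, …, aₙ, x ∈ G, the condition κ^{n+1}(x) = A_{a₁,…,aₙ}(x) ◁ κ^{n+1}(x) holds if and only if δ(κⁿ(a₁)) δ(κ^{n−1}(a₂)) ⋯ δ(κ(aₙ)) δ(κ^{n+1}(x)) = 1 in G. -/
/-
Unfolding the fold, `A_{a₁,…,aₙ}(x) = κⁿ(x) · κ^{n-1}(δ a₁) ⋯ κ⁰(δ aₙ)`, because `κ` is multiplicative.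
Hence `A(x) ◁ κ^{n+1}(x) = κ^{n+1}(x) · κⁿ(δ a₁) ⋯ κ(δ aₙ) · δ(κ^{n+1} x)`, and since `κ` commutes
with `δ` the condition is `κ^{n+1}(x) = κ^{n+1}(x) · w` with `w` the word in the claim; cancel.
-/

theorem map_foldl_ofFn_mul {G : Type*} [Monoid G] (κ : G →* G) (δ : G → G) :
    ∀ (n : ℕ) (a : Fin n → G) (x : G),
      κ ((List.ofFn a).foldl (fun u v => κ u * δ v) x)
        = (⇑κ)^[n + 1] x * (List.ofFn fun i : Fin n => (⇑κ)^[n - i] (δ (a i))).prod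
  | 0, _, x => by simp
  | n + 1, a, x => by
    have ih := map_foldl_ofFn_mul κ δ n (fun i => a i.castSucc) x
    rw [List.ofFn_succ', List.concat_eq_append, List.foldl_append, List.foldl_cons,
      List.foldl_nil, map_mul, ih, map_mul, map_list_prod, List.map_ofFn, List.ofFn_succ',
      List.concat_eq_append, List.prod_append, List.prod_singleton, mul_assoc]
    congr 3
    · exact (Function.iterate_succ_apply' _ _ _).symm
    · congr 1
      funext i
      simp only [Function.comp_apply, Fin.val_castSucc, ← Function.iterate_succ_apply' κ]
      congr 2
      omega
    · simp

theorem stmt_4_general {G : Type*} [Group G] (κ : G →* G)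
    (δ : G → G) (hcomm : ∀ x, κ (δ x) = δ (κ x))
    (n : ℕ) (a : Fin n → G) (x : G) :
    ((⇑κ)^[n + 1] x
        = κ ((List.ofFn a).foldl (fun u v => κ u * δ v) x) * δ ((⇑κ)^[n + 1] x))
    ↔ ((List.ofFn fun i : Fin n => δ ((⇑κ)^[n - i.val] (a i))).prod
        * δ ((⇑κ)^[n + 1] x) = 1) := by
  have hδ (k : ℕ) (y : G) : (⇑κ)^[k] (δ y) = δ ((⇑κ)^[k] y) :=
    (Function.Commute.iterate_left (f := κ) (g := δ) (fun y => hcomm y) k) y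
  simp only [map_foldl_ofFn_mul, hδ, mul_assoc, left_eq_mul]

/-- With `x ◁ y = κ(x)δ(y)` and `A_{a₁,…,aₙ}(x) = (⋯(x ◁ a₁)⋯) ◁ aₙ`,
the condition `κ^{n+1}(x) = A_{a₁,…,aₙ}(x) ◁ κ^{n+1}(x)` holds if and only if
`δ(κⁿ(a₁)) δ(κ^{n−1}(a₂)) ⋯ δ(κ(aₙ)) δ(κ^{n+1}(x)) = 1`. -/
theorem stmt_4 {G : Type*} [Group G] (κ : G →* G) (hκ : ∀ x, κ (κ x) = x)
    (δ : G → G) (hcomm : ∀ x, κ (δ x) = δ (κ x))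
    (n : ℕ) (a : Fin n → G) (x : G) :
    ((⇑κ)^[n + 1] x
        = κ ((List.ofFn a).foldl (fun u v => κ u * δ v) x) * δ ((⇑κ)^[n + 1] x))
    ↔ ((List.ofFn fun i : Fin n => δ ((⇑κ)^[n - i.val] (a i))).prod
        * δ ((⇑κ)^[n + 1] x) = 1) :=
  stmt_4_general κ δ hcomm n a x
end

section
/- Let G be a group, κ : G → G a group automorphism with κ ∘ κ = id_G, and δ : G → G a map with κ ∘ δ = δ ∘ κ satisfying δ(x)δ(y) = δ(y)δ(x δ(y)) for all x, y ∈ G; define x ◁ y = κ(x)δ(y). Assume that the image Im(δ) is a subgroup of G and that the fibers δ⁻¹(d), for d ∈ Im(δ), are pairwise equinumerous. Then for any a₁, …, aₙ ∈ G, the set Ann^{+1}(A_{a₁,…,aₙ}) = { x ∈ G : κ^{n+1}(x) = A_{a₁,…,aₙ}(x) ◁ κ^{n+1}(x) } is nonempty and is in bijection with Ann(G) = { x ∈ G : x ◁ κ(x) = κ(x) }. -/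
/-!
Writing `u ◁ v = κ u * δ v`, the iterated action splits off its starting point:
`A_{a₁,…,aₙ}(x) = κⁿ(x) * C` with `C = A_{a₁,…,aₙ}(1)`, and `C` lies in the subgroup `Im δ`,
which `κ` preserves. Hence `x ∈ Ann⁺¹(A_{a₁,…,aₙ})` iff `δ(κⁿ⁺¹ x) = (κ C)⁻¹`, while
`x ∈ Ann(G)` iff `δ(κ x) = 1`. Up to the involutions `κⁿ⁺¹` and `κ`, both sets are fibres of
`δ` over points of `Im δ`, so they are nonempty and equinumerous.
-/

theorem Function.Involutive.iterate {α : Type*} {f : α → α} (hf : Function.Involutive f)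
    (m : ℕ) : Function.Involutive f^[m] := fun x => by
  rw [← Function.iterate_add_apply, ← two_mul, hf.iterate_two_mul, id]

def Function.Involutive.subtypeEquiv {α : Type*} {f : α → α} (hf : Function.Involutive f)
    (p : α → Prop) : {x // p (f x)} ≃ {x // p x} :=
  Equiv.subtypeEquiv (hf.toPerm f) fun _ => Iff.rfl

section SkewFold

variable {M α : Type*} [Monoid M] (κ : M →* M) (δ : α → M)

theorem List.foldl_skew_mul (l : List α) (x y : M) :
    l.foldl (fun u v => κ u * δ v) (x * y) =
      κ^[l.length] x * l.foldl (fun u v => κ u * δ v) y := by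
  induction l generalizing x y with
  | nil => simp
  | cons v l ih =>
    simp only [List.foldl_cons, map_mul, mul_assoc, ih, List.length_cons,
      Function.iterate_succ_apply]

theorem List.foldl_skew_eq (l : List α) (x : M) :
    l.foldl (fun u v => κ u * δ v) x =
      κ^[l.length] x * l.foldl (fun u v => κ u * δ v) 1 := by
  simpa using l.foldl_skew_mul κ δ x 1

theorem List.foldl_skew_mem (H : Submonoid M) (hκ : ∀ u ∈ H, κ u ∈ H) (hδ : ∀ v, δ v ∈ H)
    (l : List α) {x : M} (hx : x ∈ H) : l.foldl (fun u v => κ u * δ v) x ∈ H := by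
  induction l generalizing x with
  | nil => exact hx
  | cons v l ih => exact ih (H.mul_mem (hκ x hx) (hδ v))

end SkewFold

theorem List.iterate_eq_skew_foldl_mul_iff {G : Type*} [Group G] (κ : G →* G) (δ : G → G)
    (l : List G) (x : G) :
    κ^[l.length + 1] x = κ (l.foldl (fun u v => κ u * δ v) x) * δ (κ^[l.length + 1] x) ↔
      δ (κ^[l.length + 1] x) = (κ (l.foldl (fun u v => κ u * δ v) 1))⁻¹ := by
  rw [l.foldl_skew_eq κ δ x, map_mul, ← Function.iterate_succ_apply' κ, mul_assoc,
    left_eq_mul, mul_eq_one_iff_inv_eq, eq_comm]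

theorem stmt_5_general {G : Type*} [Group G] (κ : G →* G) (hκ : ∀ x, κ (κ x) = x)
    (δ : G → G) (hcomm : ∀ x, κ (δ x) = δ (κ x))
    (hsub : ∃ H : Subgroup G, (H : Set G) = Set.range δ)
    (hfib : ∀ d e : G, d ∈ Set.range δ → e ∈ Set.range δ →
      Nonempty ((δ ⁻¹' {d}) ≃ (δ ⁻¹' {e})))
    (n : ℕ) (a : Fin n → G) :
    {x : G | (⇑κ)^[n + 1] x
        = κ ((List.ofFn a).foldl (fun u v => κ u * δ v) x)
          * δ ((⇑κ)^[n + 1] x)}.Nonempty ∧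
    Nonempty ({x : G | (⇑κ)^[n + 1] x
        = κ ((List.ofFn a).foldl (fun u v => κ u * δ v) x)
          * δ ((⇑κ)^[n + 1] x)}
      ≃ {x : G | κ x * δ (κ x) = κ x}) := by
  obtain ⟨H, hH⟩ := hsub
  have hmem : ∀ u, u ∈ H ↔ u ∈ Set.range δ := fun u => by rw [← hH, SetLike.mem_coe]
  have hκH : ∀ u ∈ H, κ u ∈ H := by
    rintro _ hu
    obtain ⟨v, rfl⟩ := (hmem _).1 hu
    exact (hmem _).2 ⟨κ v, (hcomm v).symm⟩
  set C := (List.ofFn a).foldl (fun u v => κ u * δ v) 1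
  have hC : (κ C)⁻¹ ∈ Set.range δ := (hmem _).1 <| H.inv_mem <| hκH _ <|
    (List.ofFn a).foldl_skew_mem κ δ H.toSubmonoid hκH (fun v => (hmem _).2 ⟨v, rfl⟩) H.one_mem
  have hAnnPlus : {x : G | (⇑κ)^[n + 1] x
      = κ ((List.ofFn a).foldl (fun u v => κ u * δ v) x) * δ ((⇑κ)^[n + 1] x)}
      = {x | δ ((⇑κ)^[n + 1] x) = (κ C)⁻¹} := by
    ext x
    simpa using (List.ofFn a).iterate_eq_skew_foldl_mul_iff κ δ x
  have hAnn : {x : G | κ x * δ (κ x) = κ x} = {x | δ (κ x) = 1} := by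
    ext
    exact mul_eq_left
  have hκinv : Function.Involutive κ := hκ
  obtain ⟨w, hw⟩ := hC
  obtain ⟨e⟩ := hfib _ 1 ⟨w, hw⟩ ((hmem 1).1 H.one_mem)
  rw [hAnnPlus, hAnn]
  exact ⟨⟨κ^[n + 1] w, by rw [Set.mem_ofPred_eq, hκinv.iterate _ w, hw]⟩,
    ⟨((hκinv.iterate _).subtypeEquiv _).trans (e.trans (hκinv.subtypeEquiv _).symm)⟩⟩

/-- With `x ◁ y = κ(x)δ(y)` as before, if `δ` satisfies
`δ(x)δ(y) = δ(y)δ(xδ(y))`, its image is a subgroup of `G`, and its fibers over the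
image are pairwise equinumerous, then for any `a₁, …, aₙ ∈ G` the set
`Ann⁺¹(A_{a₁,…,aₙ}) = { x : κ^{n+1}(x) = A_{a₁,…,aₙ}(x) ◁ κ^{n+1}(x) }` is nonempty
and in bijection with `Ann(G) = { x : x ◁ κ(x) = κ(x) }`. -/
theorem stmt_5 {G : Type*} [Group G] (κ : G →* G) (hκ : ∀ x, κ (κ x) = x)
    (δ : G → G) (hcomm : ∀ x, κ (δ x) = δ (κ x))
    (hkey : ∀ x y : G, δ x * δ y = δ y * δ (x * δ y))
    (hsub : ∃ H : Subgroup G, (H : Set G) = Set.range δ)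
    (hfib : ∀ d e : G, d ∈ Set.range δ → e ∈ Set.range δ →
      Nonempty ((δ ⁻¹' {d}) ≃ (δ ⁻¹' {e})))
    (n : ℕ) (a : Fin n → G) :
    {x : G | (⇑κ)^[n + 1] x
        = κ ((List.ofFn a).foldl (fun u v => κ u * δ v) x)
          * δ ((⇑κ)^[n + 1] x)}.Nonempty ∧
    Nonempty ({x : G | (⇑κ)^[n + 1] x
        = κ ((List.ofFn a).foldl (fun u v => κ u * δ v) x)
          * δ ((⇑κ)^[n + 1] x)}
      ≃ {x : G | κ x * δ (κ x) = κ x}) :=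
  stmt_5_general κ hκ δ hcomm hsub hfib n a
end

section
/- Let G be a group, κ : G → G a group automorphism with κ ∘ κ = id_G, and δ : G → G a map with κ ∘ δ = δ ∘ κ; define x ◁ y = κ(x)δ(y). Let a₁, …, aₙ ∈ G and suppose x ∈ G satisfies κ^{n+1}(x) = A_{a₁,…,aₙ}(x) ◁ κ^{n+1}(x). Then for every index i with 1 ≤ i ≤ n, one has A_{a₁,…,aₙ}(κ^{i+1}(aᵢ) ◁ x) = κ^{n+i}(aᵢ). -/
/-! Since `κ` is a homomorphism, the iterated twisted product is affine:
`A(y) = κⁿ(y) · C` with `C = A(1)`. The fixed-point hypothesis on `x` cancels down to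
`κ(C) · δ(κⁿ⁺¹ x) = 1`, i.e. `C = δ(κⁿ x)⁻¹` because `κ` is an involution commuting with `δ`.
Then `A(κ^{i+1}(aᵢ) ◁ x) = κ^{n+i+2}(aᵢ) · δ(κⁿ x) · C = κ^{n+i}(aᵢ)`. -/

theorem Function.Involutive.iterate_add_two {α : Type*} {f : α → α} (hf : Function.Involutive f)
    (k : ℕ) (y : α) : f^[k + 2] y = f^[k] y := by
  rw [Function.iterate_add_apply, Function.involutive_iff_iter_2_eq_id.mp hf, id]

theorem List.foldl_map_mul_eq_iterate_mul {M α : Type*} [Monoid M] (κ : M →* M) (δ : α → M)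
    (l : List α) (x : M) :
    l.foldl (fun u v => κ u * δ v) x = κ^[l.length] x * l.foldl (fun u v => κ u * δ v) 1 := by
  induction l generalizing x with
  | nil => simp
  | cons b l ih =>
    rw [List.foldl_cons, List.foldl_cons, ih, ih (κ 1 * δ b), map_one, one_mul,
      iterate_map_mul, List.length_cons, Function.iterate_succ_apply, mul_assoc]

theorem eq_inv_of_iterate_succ_eq_map_mul {G : Type*} [Group G] {κ : G →* G}
    (hκ : Function.Involutive κ) {δ : G → G} (hcomm : Function.Commute κ δ) {n : ℕ} {x C : G}
    (h : κ^[n + 1] x = κ (κ^[n] x * C) * δ (κ^[n + 1] x)) :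
    C = (δ (κ^[n] x))⁻¹ := by
  rw [map_mul, ← Function.iterate_succ_apply' κ, mul_assoc, left_eq_mul] at h
  apply eq_inv_of_mul_eq_one_left
  simpa only [map_mul, map_one, hκ _, Function.iterate_succ_apply', hcomm _] using congrArg κ h

/-- With `x ◁ y = κ(x)δ(y)`, if `x` satisfies
`κ^{n+1}(x) = A_{a₁,…,aₙ}(x) ◁ κ^{n+1}(x)`, then for every index `i` (here written
0-indexed, `j = i − 1`) one has `A_{a₁,…,aₙ}(κ^{i+1}(aᵢ) ◁ x) = κ^{n+i}(aᵢ)`. -/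
theorem stmt_6 {G : Type*} [Group G] (κ : G →* G) (hκ : ∀ x, κ (κ x) = x)
    (δ : G → G) (hcomm : ∀ x, κ (δ x) = δ (κ x))
    (n : ℕ) (a : Fin n → G) (x : G)
    (hx : (⇑κ)^[n + 1] x
        = κ ((List.ofFn a).foldl (fun u v => κ u * δ v) x) * δ ((⇑κ)^[n + 1] x)) :
    ∀ j : Fin n,
      (List.ofFn a).foldl (fun u v => κ u * δ v)
          (κ ((⇑κ)^[j.val + 2] (a j)) * δ x)
        = (⇑κ)^[n + j.val + 1] (a j) := by
  intro j
  rw [List.foldl_map_mul_eq_iterate_mul, List.length_ofFn] at hx ⊢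
  rw [eq_inv_of_iterate_succ_eq_map_mul hκ hcomm hx, iterate_map_mul,
    (Function.Commute.iterate_left hcomm n).eq, mul_inv_cancel_right,
    ← Function.iterate_succ_apply' κ (j.val + 2), ← Function.iterate_add_apply,
    show n + (j.val + 2).succ = n + j.val + 1 + 2 by omega, Function.Involutive.iterate_add_two hκ]
end

section
/- Let G be a group and δ : G → G a surjective map satisfying δ(x)δ(y) = δ(y)δ(x δ(y)) for all x, y ∈ G. Then G is the trivial group. -/
/-- If a group `G` admits a surjective map `δ : G → G` satisfying
`δ(x)δ(y) = δ(y)δ(xδ(y))` for all `x, y`, then `G` is trivial. -/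
theorem stmt_7 {G : Type*} [Group G] (δ : G → G)
    (hsurj : Function.Surjective δ)
    (hkey : ∀ x y : G, δ x * δ y = δ y * δ (x * δ y)) :
    ∀ g : G, g = 1 := by
  have h1 : ∀ x g : G, δ (x * g) = g⁻¹ * δ x * g := by
    intro x g
    obtain ⟨y, rfl⟩ := hsurj g
    have h := (hkey x y).symm
    calc δ (x * δ y) = (δ y)⁻¹ * (δ y * δ (x * δ y)) := by group
    _ = (δ y)⁻¹ * (δ x * δ y) := by rw [h]
    _ = (δ y)⁻¹ * δ x * δ y := by group
  obtain ⟨w, hw⟩ := hsurj 1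
  have hδ1 : δ 1 = 1 := by
    have h := h1 1 w
    rw [one_mul, hw] at h
    calc δ 1 = w * (w⁻¹ * δ 1 * w) * w⁻¹ := by group
    _ = w * 1 * w⁻¹ := by rw [← h]
    _ = 1 := by group
  intro g
  obtain ⟨z, rfl⟩ := hsurj g
  have h := h1 1 z
  rw [one_mul, hδ1] at h
  rw [h]; group
end

section
/- Let G be a group, f : G → G a group automorphism, and define δ : G → G by δ(x) = f(x⁻¹)x. Then the identity δ(x)δ(y) = δ(y)δ(x δ(y)) holds for all x, y ∈ G if and only if δ(δ(y)) = 1 for all y ∈ G. -/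
/-!
Write `δ x = f x⁻¹ * x`. Since `δ 1 = 1`, the identity at `x = 1` reads `δ y = δ y * δ (δ y)`,
so `δ (δ y) = 1`. Conversely `δ d = 1` says exactly that `d` is fixed by `f`, and for such `d`
twisted conjugation is equivariant: `δ (x * d) = d⁻¹ * δ x * d`. With `d = δ y` the identity
becomes `δ x * d = d * (d⁻¹ * δ x * d)`.
-/

namespace MonoidHom

variable {G : Type*} [Group G] (f : G →* G)

def twistedDelta (x : G) : G := f x⁻¹ * x

@[simp]
lemma twistedDelta_one : f.twistedDelta 1 = 1 := by
  simp [twistedDelta]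

lemma twistedDelta_eq_one_iff {d : G} : f.twistedDelta d = 1 ↔ f d = d := by
  rw [twistedDelta, map_inv, inv_mul_eq_one, eq_comm]

lemma twistedDelta_mul_of_map_eq {d : G} (hd : f d = d) (x : G) :
    f.twistedDelta (x * d) = d⁻¹ * f.twistedDelta x * d := by
  simp only [twistedDelta, mul_inv_rev, map_mul, map_inv, hd, mul_assoc]

end MonoidHom

theorem stmt_9_general {G : Type*} [Group G] (f : G →* G) :
    (∀ x y : G,
        (f x⁻¹ * x) * (f y⁻¹ * y)
          = (f y⁻¹ * y) * (f (x * (f y⁻¹ * y))⁻¹ * (x * (f y⁻¹ * y))))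
      ↔ (∀ y : G, f (f y⁻¹ * y)⁻¹ * (f y⁻¹ * y) = 1) := by
  change (∀ x y, f.twistedDelta x * f.twistedDelta y
      = f.twistedDelta y * f.twistedDelta (x * f.twistedDelta y))
    ↔ ∀ y, f.twistedDelta (f.twistedDelta y) = 1
  refine ⟨fun h y => ?_, fun h x y => ?_⟩
  · simpa using h 1 y
  · rw [f.twistedDelta_mul_of_map_eq (f.twistedDelta_eq_one_iff.1 (h y))]
    group

/-- For a group automorphism `f : G → G` and
`δ(x) = f(x⁻¹)x`, the identity `δ(x)δ(y) = δ(y)δ(xδ(y))` holds for all `x, y`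
iff `δ(δ(y)) = 1` for all `y`. -/
theorem stmt_9 {G : Type*} [Group G] (f : G →* G) (hf : Function.Bijective f) :
    (∀ x y : G,
        (f x⁻¹ * x) * (f y⁻¹ * y)
          = (f y⁻¹ * y) * (f (x * (f y⁻¹ * y))⁻¹ * (x * (f y⁻¹ * y))))
      ↔ (∀ y : G, f (f y⁻¹ * y)⁻¹ * (f y⁻¹ * y) = 1) :=
  stmt_9_general f
end

section
/- Let G be a group, κ : G → G a group automorphism with κ ∘ κ = id_G, and δ : G → G a map with κ ∘ δ = δ ∘ κ satisfying δ(x)δ(y) = δ(y)δ(x δ(y)) for all x, y ∈ G, and assume Im(δ) is a subgroup of G. Define x ◁ y = κ(x)δ(y) and Tw : G → G by Tw(g) = g δ(g)⁻¹. Then: (a) Tw(g) ◁ κ(g) = κ(g) for every g ∈ G (so Tw is the twisting map of the skew-rack); and (b) for every a ∈ G and every natural number n, the n-fold iterate satisfies Twⁿ(a) = a δ(a)^{−n}. -/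
/-- With `x ◁ y = κ(x)δ(y)` satisfying the skew-rack condition and
`Im(δ)` a subgroup, the map `Tw(g) = g δ(g)⁻¹` satisfies `Tw(g) ◁ κ(g) = κ(g)`
(so it is the twisting map), and `Twⁿ(a) = a δ(a)^{−n}` for all `a` and `n`. -/
theorem stmt_12 {G : Type*} [Group G] (κ : G →* G) (hκ : ∀ x, κ (κ x) = x)
    (δ : G → G) (hcomm : ∀ x, κ (δ x) = δ (κ x))
    (hkey : ∀ x y : G, δ x * δ y = δ y * δ (x * δ y))
    (hsub : ∃ H : Subgroup G, (H : Set G) = Set.range δ) :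
    (∀ g : G, κ (g * (δ g)⁻¹) * δ (κ g) = κ g) ∧
    (∀ (a : G) (n : ℕ), (fun g : G => g * (δ g)⁻¹)^[n] a = a * (δ a) ^ (-(n : ℤ))) := by
  obtain ⟨H, hH⟩ := hsub
  -- key fact: δ(x * δ(x)⁻¹) = δ x
  have hfix : ∀ x : G, δ (x * (δ x)⁻¹) = δ x := by
    intro x
    have hx : δ x ∈ H := by rw [SetLike.mem_coe.symm, hH]; exact ⟨x, rfl⟩
    have hxi : (δ x)⁻¹ ∈ (H : Set G) := H.inv_mem hx
    rw [hH] at hxi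
    obtain ⟨y, hy⟩ := hxi
    have := hkey x y
    rw [hy] at this
    -- δ x * (δ x)⁻¹ = (δ x)⁻¹ * δ (x * (δ x)⁻¹)
    have h1 : (1 : G) = (δ x)⁻¹ * δ (x * (δ x)⁻¹) := by
      rw [← mul_inv_cancel (δ x)]; exact this
    calc δ (x * (δ x)⁻¹) = δ x * ((δ x)⁻¹ * δ (x * (δ x)⁻¹)) := by group
      _ = δ x * 1 := by rw [← h1]
      _ = δ x := mul_one _
  constructor
  · intro g
    rw [map_mul, map_inv, hcomm]
    group
  · intro a n
    -- strengthen: also δ of the iterate equals δ a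
    have main : ∀ n : ℕ, (fun g : G => g * (δ g)⁻¹)^[n] a = a * (δ a) ^ (-(n : ℤ)) ∧
        δ ((fun g : G => g * (δ g)⁻¹)^[n] a) = δ a := by
      intro n
      induction n with
      | zero => simp
      | succ n ih =>
        obtain ⟨h1, h2⟩ := ih
        rw [Function.iterate_succ_apply']
        constructor
        · rw [h2, h1]
          push_cast
          rw [neg_add, zpow_add]
          group
        · have := hfix ((fun g : G => g * (δ g)⁻¹)^[n] a)
          rw [h2] at this
          rw [h2]
          exact this
    exact (main n).1
end

section
/- Let G be a group, κ : G → G a group automorphism with κ ∘ κ = id_G, and δ : G → G a map with κ ∘ δ = δ ∘ κ satisfying δ(x)δ(y) = δ(y)δ(x δ(y)) for all x, y ∈ G. Assume Im(δ) is a subgroup of G and that the fibers δ⁻¹(d), for d ∈ Im(δ), are pairwise equinumerous. Define x ◁ y = κ(x)δ(y) and Tw^k(x) = x δ(x)^{−k}. Then for any positive integers n, m, the set { (a, b) ∈ G × G : κ(a ◁ b) = Twⁿ(a) and κ(b ◁ a) = Tw^m(b) } is in bijection with { a ∈ G : δ(a)^{nm−1} = 1 } × δ⁻¹({1}). -/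
/-!
Because `κ` is an involutive automorphism, the first coloring equation says exactly
`δ b = κ(δ a)^{-n}`; substituting this into the second one turns it into
`δ a = (δ a)^{nm}`, i.e. `δ(a)^{nm-1} = 1`. A coloring is therefore a choice of `a` with
`δ(a)^{nm-1} = 1` together with a point of the fibre of `δ` over `κ(δ a)^{-n} = δ(κ a)^{-n}`.
That element lies in the subgroup `Im δ`, so its fibre is equinumerous with `δ⁻¹(1)`.
-/

def equivProdOfFiberEquiv {α β γ T : Type*} (P : α → Prop) (f : β → γ) (c : α → γ)
    (e : ∀ a, P a → f ⁻¹' {c a} ≃ T) :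
    {p : α × β | P p.1 ∧ f p.2 = c p.1} ≃ {a | P a} × T where
  toFun p := (⟨p.1.1, p.2.1⟩, e p.1.1 p.2.1 ⟨p.1.2, p.2.2⟩)
  invFun q := ⟨(q.1.1, (e q.1.1 q.1.2).symm q.2), q.1.2, ((e q.1.1 q.1.2).symm q.2).2⟩
  left_inv p := by
    ext
    · rfl
    · exact congrArg Subtype.val ((e p.1.1 p.2.1).symm_apply_apply _)
  right_inv q := Prod.ext rfl ((e q.1.1 q.1.2).apply_symm_apply q.2)

section

variable {G : Type*} [Group G]

theorem zpow_neg_zpow_neg_eq_self_iff (x : G) {n m : ℕ} (hn : 0 < n) (hm : 0 < m) :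
    (x ^ (-(n : ℤ))) ^ (-(m : ℤ)) = x ↔ x ^ (n * m - 1) = 1 := by
  obtain ⟨k, hk⟩ := Nat.exists_eq_succ_of_ne_zero (Nat.mul_pos hn hm).ne'
  rw [← zpow_mul, neg_mul_neg, ← Nat.cast_mul, zpow_natCast, hk, pow_succ, mul_eq_right,
    Nat.succ_sub_one]

theorem Function.Involutive.map_apply_mul_eq_mul_iff {κ : G →* G} (hκ : Function.Involutive κ)
    (a y z : G) : κ (κ a * y) = a * z ↔ y = κ z := by
  rw [map_mul, hκ, mul_right_inj, hκ.eq_iff]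

theorem hopf_coloring_iff {κ : G →* G} (hκ : Function.Involutive κ) (δ : G → G) {n m : ℕ}
    (hn : 0 < n) (hm : 0 < m) (a b : G) :
    (κ (κ a * δ b) = a * δ a ^ (-(n : ℤ)) ∧ κ (κ b * δ a) = b * δ b ^ (-(m : ℤ))) ↔
      δ a ^ (n * m - 1) = 1 ∧ δ b = κ (δ a) ^ (-(n : ℤ)) := by
  rw [hκ.map_apply_mul_eq_mul_iff, hκ.map_apply_mul_eq_mul_iff, map_zpow, and_comm (a := _ = 1)]
  refine and_congr_right fun hb => ?_
  rw [hb, map_zpow, map_zpow, hκ, eq_comm, zpow_neg_zpow_neg_eq_self_iff _ hn hm]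

end

theorem stmt_13_general {G : Type*} [Group G] (κ : G →* G) (hκ : ∀ x, κ (κ x) = x)
    (δ : G → G) (hcomm : ∀ x, κ (δ x) = δ (κ x))
    (hsub : ∃ H : Subgroup G, (H : Set G) = Set.range δ)
    (hfib : ∀ d e : G, d ∈ Set.range δ → e ∈ Set.range δ →
      Nonempty ((δ ⁻¹' {d}) ≃ (δ ⁻¹' {e})))
    (n m : ℕ) (hn : 0 < n) (hm : 0 < m) :
    Nonempty
      ({p : G × G |
          κ (κ p.1 * δ p.2) = p.1 * (δ p.1) ^ (-(n : ℤ)) ∧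
          κ (κ p.2 * δ p.1) = p.2 * (δ p.2) ^ (-(m : ℤ))}
        ≃ ({a : G | (δ a) ^ (n * m - 1) = 1} × (δ ⁻¹' {1}))) := by
  obtain ⟨H, hH⟩ := hsub
  have one_mem_range : (1 : G) ∈ Set.range δ := hH ▸ H.one_mem
  have target_mem_range (a : G) : κ (δ a) ^ (-(n : ℤ)) ∈ Set.range δ := by
    rw [← hH, hcomm]
    exact H.zpow_mem (show δ (κ a) ∈ (H : Set G) from hH ▸ Set.mem_range_self _) _
  exact ⟨(Equiv.subtypeEquivRight fun p : G × G => hopf_coloring_iff hκ δ hn hm p.1 p.2).trans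
    (equivProdOfFiberEquiv (fun a => δ a ^ (n * m - 1) = 1) δ (fun a => κ (δ a) ^ (-(n : ℤ)))
      fun a _ => (hfib _ _ (target_mem_range a) one_mem_range).some)⟩

/-- With `x ◁ y = κ(x)δ(y)` and `Tw^k(x) = x δ(x)^{−k}`, under the
hypotheses of Lemma 5.1 (key identity, image a subgroup, equinumerous fibers), for
positive integers `n, m` the set of colorings of the Hopf link with framings `(n,m)`,
`{ (a,b) : κ(a ◁ b) = Twⁿ(a), κ(b ◁ a) = Tw^m(b) }`, is in bijection with
`{ a : δ(a)^{nm−1} = 1 } × δ⁻¹(1)`. -/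
theorem stmt_13 {G : Type*} [Group G] (κ : G →* G) (hκ : ∀ x, κ (κ x) = x)
    (δ : G → G) (hcomm : ∀ x, κ (δ x) = δ (κ x))
    (hkey : ∀ x y : G, δ x * δ y = δ y * δ (x * δ y))
    (hsub : ∃ H : Subgroup G, (H : Set G) = Set.range δ)
    (hfib : ∀ d e : G, d ∈ Set.range δ → e ∈ Set.range δ →
      Nonempty ((δ ⁻¹' {d}) ≃ (δ ⁻¹' {e})))
    (n m : ℕ) (hn : 0 < n) (hm : 0 < m) :
    Nonempty
      ({p : G × G |
          κ (κ p.1 * δ p.2) = p.1 * (δ p.1) ^ (-(n : ℤ)) ∧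
          κ (κ p.2 * δ p.1) = p.2 * (δ p.2) ^ (-(m : ℤ))}
        ≃ ({a : G | (δ a) ^ (n * m - 1) = 1} × (δ ⁻¹' {1}))) :=
  stmt_13_general κ hκ δ hcomm hsub hfib n m hn hm
end

section
/- Let (X, ◁, κ, ρ) be a symmetric skew-rack, A an abelian group, and φ : X × X → A a birack 2-cocycle satisfying in addition φ(a, b) = −φ(ρ(a), κ(b)) for all a, b ∈ X. Define φ̄ : X × X → A by φ̄(a, b) = φ(a, b) − φ(a ◁ b, ρ(b)). Then φ̄ is a symmetric birack 2-cocycle; that is, φ̄(a,b) + φ̄(a ◁ b, c) = φ̄(a, κ(c)) + φ̄(a ◁ κ(c), b ◁ c) and φ̄(b,c) = φ̄(κ(b), κ(c)) for all a, b, c ∈ X, and φ̄(a, b) = −φ̄(a ◁ b, ρ(b)) = −φ̄(ρ(a), κ(b)) for all a, b ∈ X. -/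
/-- On a symmetric skew-rack `(X, ◁, κ, ρ)`, if a birack 2-cocycle `φ`
additionally satisfies `φ(a,b) = −φ(ρ(a), κ(b))`, then
`φ̄(a,b) = φ(a,b) − φ(a ◁ b, ρ(b))` is a symmetric birack 2-cocycle. -/
theorem stmt_15 {X : Type*} (op : X → X → X) (κ ρ : X → X)
    (hκbij : Function.Bijective κ)
    (SR1 : ∀ a b : X, κ (op a b) = op (κ a) (κ b))
    (SR2 : ∀ b : X, Function.Bijective fun x : X => op x b)
    (SR3 : ∀ a b c : X, op (op a b) c = op (op a (κ c)) (op b c))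
    (SS1a : ∀ a b : X, op (op a b) (ρ b) = a)
    (SS1b : ∀ a b : X, op (ρ a) (κ b) = ρ (op a b))
    (SS2a : ∀ a : X, ρ (ρ a) = a)
    (SS2b : ∀ a : X, κ (κ a) = a)
    (SS2c : ∀ a : X, ρ (κ a) = κ (ρ a))
    {A : Type*} [AddCommGroup A] (φ : X → X → A)
    (hcoc : ∀ a b c : X,
      φ a b + φ (op a b) c = φ a (κ c) + φ (op a (κ c)) (op b c))
    (hκinv : ∀ b c : X, φ b c = φ (κ b) (κ c))
    (hextra : ∀ a b : X, φ a b = -φ (ρ a) (κ b)) :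
    ∃ ψ : X → X → A,
      (∀ a b : X, ψ a b = φ a b - φ (op a b) (ρ b)) ∧
      (∀ a b c : X,
        ψ a b + ψ (op a b) c = ψ a (κ c) + ψ (op a (κ c)) (op b c)) ∧
      (∀ b c : X, ψ b c = ψ (κ b) (κ c)) ∧
      (∀ a b : X, ψ a b = -ψ (op a b) (ρ b)) ∧
      (∀ a b : X, ψ a b = -ψ (ρ a) (κ b)) := by

  refine ⟨fun a b => φ a b - φ (op a b) (ρ b), fun a b => rfl, ?_, ?_, ?_, ?_⟩
  · intro a b c
    have key : φ (op (op a b) c) (ρ (op b c)) + φ (op a (κ c)) (κ (ρ c)) =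
        φ (op (op a b) c) (ρ c) + φ (op a b) (ρ b) := by
      have h := hcoc (op (op a b) c) (ρ (op b c)) (κ (ρ c))
      rw [SS2b] at h
      have e1 : op (op (op a b) c) (ρ (op b c)) = op a (κ c) := by
        rw [SR3 a b c, SS1a]
      have e2 : op (op (op a b) c) (ρ c) = op a b := SS1a (op a b) c
      have e3 : op (ρ (op b c)) (κ (ρ c)) = ρ b := by
        rw [SS1b, SS1a]
      rw [e1, e2, e3] at h
      exact h
    show φ a b - φ (op a b) (ρ b) + (φ (op a b) c - φ (op (op a b) c) (ρ c)) =
      φ a (κ c) - φ (op a (κ c)) (ρ (κ c)) +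
        (φ (op a (κ c)) (op b c) - φ (op (op a (κ c)) (op b c)) (ρ (op b c)))
    rw [← SR3, SS2c, sub_add_sub_comm, sub_add_sub_comm, hcoc a b c]
    congr 1
    rw [add_comm (φ (op a b) (ρ b)), ← key, add_comm]
  · intro b c
    show φ b c - φ (op b c) (ρ c) =
      φ (κ b) (κ c) - φ (op (κ b) (κ c)) (ρ (κ c))
    rw [← SR1, SS2c, ← hκinv, ← hκinv]
  · intro a b
    show φ a b - φ (op a b) (ρ b) =
      -(φ (op a b) (ρ b) - φ (op (op a b) (ρ b)) (ρ (ρ b)))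
    rw [SS1a, SS2a]
    abel
  · intro a b
    show φ a b - φ (op a b) (ρ b) =
      -(φ (ρ a) (κ b) - φ (op (ρ a) (κ b)) (ρ (κ b)))
    rw [SS1b, SS2c, hextra a b, hextra (op a b) (ρ b)]
    abel
end
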